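/- arXiv:2312.07881 — 2 statements merged into one kernel-verified Lean document; each statement's English description precedes it below -/
import Mathlib

section
/- Let ψ : [0,1] → ℝ^r and σ² : [0,1] → ℝ be continuous with σ²(s) ≥ a > 0, set f_t = ψ(t/T) and σ_t² = σ²(t/T), and let |α| < 1. With L_{ts} = α^{t-s-1} for t>s (0 otherwise), F = (f₁,...,f_T)', D = diag(σ_t²), one has (1/T)·F'L'D⁻¹F → (1/(1-α))·∫₀¹ ψ(s)ψ(s)'/σ²(s) ds as T → ∞. -/
/-!
Entry `(i, j)` of `(1/T) F'L'D⁻¹F` equals `∑_k α^k S_T(k)`, where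
`S_T(k) = (1/T) ∑_t ψ_i(t/T) ψ_j((t+k+1)/T) / σ²((t+k+1)/T)` is a Riemann sum at lag `k + 1`.
For fixed `k`, uniform continuity of `ψ_j / σ²` on `[0, 1]` makes `S_T(k)` differ from the ordinary
Riemann sum of `ψ_i ψ_j / σ²` by `o(1)`, so `S_T(k) → ∫₀¹ ψ_i ψ_j / σ²`. The lag sums are bounded
uniformly in `T` and `k`, so Tannery's theorem passes the limit through `∑_k α^k = 1 / (1 - α)`.
-/

open Matrix Filter Finset Topology MeasureTheory

/-- The paper's grid point `t / T`, with the 0-based index `n = t - 1`. -/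
noncomputable def gridPoint (T n : ℕ) : ℝ := ((n : ℝ) + 1) / T

lemma gridPoint_mem_Icc {T n : ℕ} (hn : n < T) : gridPoint T n ∈ Set.Icc (0 : ℝ) 1 := by
  have hT : (0 : ℝ) < T := by exact_mod_cast n.zero_le.trans_lt hn
  refine ⟨by unfold gridPoint; positivity, (div_le_one hT).2 ?_⟩
  exact_mod_cast hn

lemma gridPoint_add_sub_gridPoint (T n m : ℕ) : gridPoint T (n + m) - gridPoint T n = m / T := by
  unfold gridPoint; push_cast; ring

lemma gridPoint_sub_div (T t : ℕ) : gridPoint T t - t / T = 1 / T := by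
  unfold gridPoint; ring

lemma div_le_gridPoint (T t : ℕ) : (t : ℝ) / T ≤ gridPoint T t := by
  unfold gridPoint; gcongr; linarith

lemma IsCompact.exists_pos_abs_le_of_continuousOn {s : Set ℝ} {u : ℝ → ℝ} (hs : IsCompact s)
    (hu : ContinuousOn u s) : ∃ M > 0, ∀ x ∈ s, |u x| ≤ M := by
  obtain ⟨C, hC⟩ := hs.exists_bound_of_continuousOn hu
  exact ⟨max C 1, by positivity, fun x hx => (hC x hx).trans (le_max_left _ _)⟩

lemma IsCompact.eventually_abs_sub_le_of_continuousOn {s : Set ℝ} {u : ℝ → ℝ} (hs : IsCompact s)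
    (hu : ContinuousOn u s) (c : ℝ) {ε : ℝ} (hε : 0 < ε) :
    ∀ᶠ T : ℕ in atTop, ∀ x ∈ s, ∀ y ∈ s, |x - y| ≤ c / T → |u x - u y| ≤ ε := by
  obtain ⟨δ, hδ, hu⟩ :=
    Metric.uniformContinuousOn_iff.mp (hs.uniformContinuousOn_of_continuous hu) ε hε
  filter_upwards [(tendsto_const_div_atTop_nhds_zero_nat c).eventually (gt_mem_nhds hδ)]
    with T hT x hx y hy hxy
  exact (hu x hx y hy ((hxy.trans_lt hT : |x - y| < δ))).le

lemma uIcc_div_gridPoint_subset_Icc {T t : ℕ} (ht : t < T) :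
    Set.uIcc ((t : ℝ) / T) (gridPoint T t) ⊆ Set.Icc 0 1 :=
  Set.uIcc_subset_Icc ⟨by positivity, (div_le_gridPoint T t).trans (gridPoint_mem_Icc ht).2⟩
    (gridPoint_mem_Icc ht)

lemma intervalIntegral_zero_one_eq_sum {φ : ℝ → ℝ} (hφ : IntervalIntegrable φ volume 0 1)
    {T : ℕ} (hT : T ≠ 0) :
    ∫ x in (0 : ℝ)..1, φ x = ∑ t ∈ range T, ∫ x in (t / T : ℝ)..gridPoint T t, φ x := by
  have hT' : (T : ℝ) ≠ 0 := by exact_mod_cast hT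
  have := intervalIntegral.sum_integral_adjacent_intervals (a := fun t : ℕ => (t : ℝ) / T)
    fun t ht => hφ.mono_set <| by
      simpa [Set.uIcc_of_le zero_le_one, gridPoint] using uIcc_div_gridPoint_subset_Icc ht
  simp only [Nat.cast_add, Nat.cast_one, CharP.cast_eq_zero, zero_div, div_self hT'] at this
  exact this.symm

lemma abs_div_sub_integral_cell_le {φ : ℝ → ℝ} {T t : ℕ} {ε : ℝ}
    (hφ : IntervalIntegrable φ volume (t / T) (gridPoint T t))
    (hε : ∀ x ∈ Set.uIoc ((t : ℝ) / T) (gridPoint T t), |φ (gridPoint T t) - φ x| ≤ ε) :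
    |φ (gridPoint T t) / T - ∫ x in (t / T : ℝ)..gridPoint T t, φ x| ≤ ε / T := by
  have hconst : φ (gridPoint T t) / T = ∫ _ in (t / T : ℝ)..gridPoint T t, φ (gridPoint T t) := by
    rw [intervalIntegral.integral_const, gridPoint_sub_div, smul_eq_mul]; ring
  rw [hconst, ← intervalIntegral.integral_sub intervalIntegrable_const hφ]
  calc _ ≤ ε * |gridPoint T t - t / T| := by
        simpa only [Real.norm_eq_abs] using intervalIntegral.norm_integral_le_of_norm_le_const
          (f := fun x => φ (gridPoint T t) - φ x) (by simpa only [Real.norm_eq_abs] using hε)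
    _ = ε / T := by rw [gridPoint_sub_div, abs_of_nonneg (by positivity)]; ring

theorem tendsto_riemannSum_gridPoint {φ : ℝ → ℝ} (hφ : ContinuousOn φ (Set.Icc 0 1)) :
    Tendsto (fun T : ℕ => (1 / T : ℝ) * ∑ t ∈ range T, φ (gridPoint T t)) atTop
      (𝓝 (∫ x in (0 : ℝ)..1, φ x)) := by
  rw [Metric.tendsto_nhds]
  intro ε hε
  filter_upwards [isCompact_Icc.eventually_abs_sub_le_of_continuousOn hφ 1 (half_pos hε),
    eventually_ne_atTop 0] with T hclose hT
  rw [Real.dist_eq, intervalIntegral_zero_one_eq_sum (hφ.intervalIntegrable_of_Icc zero_le_one) hT,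
    mul_sum, ← sum_sub_distrib]
  calc _ ≤ ∑ t ∈ range T, ε / 2 / T := by
        refine (abs_sum_le_sum_abs _ _).trans (sum_le_sum fun t ht => ?_)
        have hcell := uIcc_div_gridPoint_subset_Icc (mem_range.1 ht)
        rw [one_div_mul_eq_div]
        refine abs_div_sub_integral_cell_le ((hφ.mono hcell).intervalIntegrable)
          fun x hx => hclose _ (hcell Set.right_mem_uIcc) _ (hcell (Set.uIoc_subset_uIcc hx)) ?_
        rw [Set.uIoc_of_le (div_le_gridPoint T t)] at hx
        rw [abs_of_nonneg (by linarith [hx.2])]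
        linarith [hx.1, gridPoint_sub_div T t]
    _ < ε := by
        rw [sum_const, card_range, nsmul_eq_mul]
        field_simp
        linarith

lemma sum_range_ite_add_lt_le (T m : ℕ) {B : ℝ} (hB : 0 ≤ B) :
    ∑ t ∈ range T, (if t + m < T then 0 else B) ≤ m * B := by
  rw [sum_ite, sum_const_zero, zero_add, sum_const, nsmul_eq_mul]
  gcongr
  calc ((range T).filter fun t => ¬t + m < T).card ≤ (Ico (T - m) T).card :=
        card_le_card fun t ht => by simp only [mem_filter, mem_range, mem_Ico] at ht ⊢; omega
    _ ≤ m := by simp only [Nat.card_Ico]; omega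

theorem tendsto_average_of_abs_sub_le {a b : ℕ → ℕ → ℝ} {l : ℝ} {m : ℕ} {B : ℝ}
    (hb : Tendsto (fun T : ℕ => (1 / T : ℝ) * ∑ t ∈ range T, b T t) atTop (𝓝 l))
    (hbound : ∀ T, ∀ t < T, |a T t - b T t| ≤ B)
    (hclose : ∀ ε > 0, ∀ᶠ T in atTop, ∀ t, t + m < T → |a T t - b T t| ≤ ε) :
    Tendsto (fun T : ℕ => (1 / T : ℝ) * ∑ t ∈ range T, a T t) atTop (𝓝 l) := by
  have hB : 0 ≤ B := (abs_nonneg _).trans (hbound 1 0 one_pos)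
  have hdiff : Tendsto (fun T : ℕ => (1 / T : ℝ) * ∑ t ∈ range T, (a T t - b T t)) atTop (𝓝 0) := by
    rw [Metric.tendsto_nhds]
    intro ε hε
    filter_upwards [hclose _ (half_pos hε), eventually_ne_atTop 0,
      (tendsto_const_div_atTop_nhds_zero_nat (m * B)).eventually (gt_mem_nhds (half_pos hε))]
      with T hnear hT hsmall
    have hT' : (0 : ℝ) < T := by positivity
    have hpoint : ∀ t ∈ range T, |a T t - b T t| ≤ ε / 2 + if t + m < T then 0 else B := by
      intro t ht
      split_ifs with h
      · linarith [hnear t h]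
      · linarith [hbound T t (mem_range.1 ht)]
    rw [Real.dist_eq, sub_zero, abs_mul, abs_of_pos (by positivity)]
    calc 1 / (T : ℝ) * |∑ t ∈ range T, (a T t - b T t)|
        ≤ 1 / T * (T * (ε / 2) + m * B) := by
          gcongr
          refine (abs_sum_le_sum_abs _ _).trans ((sum_le_sum hpoint).trans ?_)
          rw [sum_add_distrib, sum_const, card_range, nsmul_eq_mul]
          gcongr
          exact sum_range_ite_add_lt_le T m hB
      _ = ε / 2 + m * B / T := by field_simp
      _ < ε := by linarith
  refine (add_zero l ▸ hb.add hdiff).congr fun T => ?_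
  rw [sum_sub_distrib]
  ring

noncomputable def lagTerm (g h : ℝ → ℝ) (T k t : ℕ) : ℝ :=
  if t + k + 1 < T then g (gridPoint T t) * h (gridPoint T (t + k + 1)) else 0

noncomputable def lagSum (g h : ℝ → ℝ) (T k : ℕ) : ℝ :=
  (1 / T : ℝ) * ∑ t ∈ range T, lagTerm g h T k t

section LagSum

variable {g h : ℝ → ℝ}

lemma abs_lagTerm_le {Mg Mh : ℝ} (hg : ∀ x ∈ Set.Icc (0 : ℝ) 1, |g x| ≤ Mg)
    (hh : ∀ x ∈ Set.Icc (0 : ℝ) 1, |h x| ≤ Mh) (T k t : ℕ) : |lagTerm g h T k t| ≤ Mg * Mh := by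
  unfold lagTerm
  split_ifs with htT
  · rw [abs_mul]
    exact mul_le_mul (hg _ (gridPoint_mem_Icc (by omega))) (hh _ (gridPoint_mem_Icc htT))
      (abs_nonneg _) ((abs_nonneg _).trans (hg 0 (by simp)))
  · rw [abs_zero]
    exact mul_nonneg ((abs_nonneg _).trans (hg 0 (by simp))) ((abs_nonneg _).trans (hh 0 (by simp)))

lemma abs_lagSum_le {Mg Mh : ℝ} (hg : ∀ x ∈ Set.Icc (0 : ℝ) 1, |g x| ≤ Mg)
    (hh : ∀ x ∈ Set.Icc (0 : ℝ) 1, |h x| ≤ Mh) (T k : ℕ) : |lagSum g h T k| ≤ Mg * Mh := by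
  unfold lagSum
  rcases Nat.eq_zero_or_pos T with rfl | hT
  · simpa using mul_nonneg ((abs_nonneg _).trans (hg 0 (by simp)))
      ((abs_nonneg _).trans (hh 0 (by simp)))
  have hT' : (0 : ℝ) < T := by exact_mod_cast hT
  rw [abs_mul, abs_of_pos (by positivity)]
  calc 1 / (T : ℝ) * |∑ t ∈ range T, lagTerm g h T k t| ≤ 1 / T * (T * (Mg * Mh)) := by
        gcongr
        refine (abs_sum_le_sum_abs _ _).trans ?_
        simpa using sum_le_sum fun t (_ : t ∈ range T) => abs_lagTerm_le hg hh T k t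
    _ = Mg * Mh := by field_simp

lemma lagSum_eq_zero_of_le {T k : ℕ} (hTk : T ≤ k) : lagSum g h T k = 0 := by
  unfold lagSum lagTerm
  rw [sum_eq_zero fun t _ => if_neg (by omega), mul_zero]

theorem tendsto_lagSum (hg : ContinuousOn g (Set.Icc 0 1)) (hh : ContinuousOn h (Set.Icc 0 1))
    (k : ℕ) : Tendsto (fun T => lagSum g h T k) atTop (𝓝 (∫ x in (0 : ℝ)..1, g x * h x)) := by
  obtain ⟨Mg, hMg, hgM⟩ := isCompact_Icc.exists_pos_abs_le_of_continuousOn hg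
  obtain ⟨Mh, -, hhM⟩ := isCompact_Icc.exists_pos_abs_le_of_continuousOn hh
  refine tendsto_average_of_abs_sub_le (m := k + 1) (B := Mg * Mh + Mg * Mh)
    (tendsto_riemannSum_gridPoint (hg.mul hh)) (fun T t ht => ?_) fun ε hε => ?_
  · refine (abs_sub _ _).trans (add_le_add (abs_lagTerm_le hgM hhM T k t) ?_)
    have hx := gridPoint_mem_Icc ht
    rw [abs_mul]
    exact mul_le_mul (hgM _ hx) (hhM _ hx) (abs_nonneg _) hMg.le
  · filter_upwards [isCompact_Icc.eventually_abs_sub_le_of_continuousOn hh (k + 1)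
      (div_pos hε hMg)] with T hclose t ht
    have hx := gridPoint_mem_Icc (T := T) (n := t) (by omega)
    have hy := gridPoint_mem_Icc (T := T) (n := t + k + 1) (by omega)
    rw [lagTerm, if_pos (by omega), ← mul_sub, abs_mul]
    calc |g (gridPoint T t)| * |h (gridPoint T (t + k + 1)) - h (gridPoint T t)|
        ≤ Mg * (ε / Mg) := by
          refine mul_le_mul (hgM _ hx) (hclose _ hy _ hx ?_) (abs_nonneg _) hMg.le
          rw [add_assoc, gridPoint_add_sub_gridPoint, abs_of_nonneg (by positivity)]
          push_cast; exact le_rfl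
      _ = ε := by field_simp

end LagSum

lemma sum_lowerTriangular_pow_mul {R : Type*} [CommSemiring R] (α : R) (u v : ℕ → R) (T : ℕ) :
    ∑ s ∈ range T, ∑ t ∈ range T, (if t < s then α ^ (s - t - 1) else 0) * (u t * v s) =
      ∑ k ∈ range T, α ^ k * ∑ t ∈ range T, if t + k + 1 < T then u t * v (t + k + 1) else 0 := by
  have hpow : ∀ s ∈ range T, ∀ t, (if t < s then α ^ (s - t - 1) else 0) =
      ∑ k ∈ range T, if t + k + 1 = s then α ^ k else 0 := by
    intro s hs t
    split_ifs with hts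
    · rw [sum_congr rfl fun k _ => if_congr (show t + k + 1 = s ↔ k = s - t - 1 by omega) rfl rfl,
        sum_ite_eq', if_pos (by simp only [mem_range] at hs ⊢; omega)]
    · exact (sum_eq_zero fun k _ => if_neg (by omega)).symm
  calc _ = ∑ s ∈ range T, ∑ t ∈ range T, ∑ k ∈ range T,
        if t + k + 1 = s then α ^ k * (u t * v s) else 0 := by
        refine sum_congr rfl fun s hs => sum_congr rfl fun t _ => ?_
        rw [hpow s hs, sum_mul]
        simp only [ite_mul, zero_mul]
    _ = ∑ t ∈ range T, ∑ k ∈ range T, ∑ s ∈ range T,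
        if t + k + 1 = s then α ^ k * (u t * v s) else 0 := by
        rw [sum_comm]
        exact sum_congr rfl fun t _ => sum_comm
    _ = ∑ k ∈ range T, ∑ t ∈ range T, ∑ s ∈ range T,
        if t + k + 1 = s then α ^ k * (u t * v s) else 0 := sum_comm
    _ = _ := by
        refine sum_congr rfl fun k _ => ?_
        rw [mul_sum]
        refine sum_congr rfl fun t _ => ?_
        rw [sum_ite_eq]
        simp only [mem_range, mul_ite, mul_zero]

theorem tendsto_lowerTriangular_pow_sum {α : ℝ} (hα : |α| < 1) {g h : ℝ → ℝ}
    (hg : ContinuousOn g (Set.Icc 0 1)) (hh : ContinuousOn h (Set.Icc 0 1)) :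
    Tendsto (fun T : ℕ => (1 / T : ℝ) * ∑ s ∈ range T, ∑ t ∈ range T,
        (if t < s then α ^ (s - t - 1) else 0) * (g (gridPoint T t) * h (gridPoint T s)))
      atTop (𝓝 (1 / (1 - α) * ∫ x in (0 : ℝ)..1, g x * h x)) := by
  obtain ⟨Mg, -, hgM⟩ := isCompact_Icc.exists_pos_abs_le_of_continuousOn hg
  obtain ⟨Mh, -, hhM⟩ := isCompact_Icc.exists_pos_abs_le_of_continuousOn hh
  have hlag : ∀ T : ℕ, (1 / T : ℝ) * ∑ s ∈ range T, ∑ t ∈ range T,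
      (if t < s then α ^ (s - t - 1) else 0) * (g (gridPoint T t) * h (gridPoint T s)) =
      ∑' k, α ^ k * lagSum g h T k := by
    intro T
    rw [sum_lowerTriangular_pow_mul, tsum_eq_sum (s := range T) fun k hk => by
      rw [lagSum_eq_zero_of_le (by simpa using hk), mul_zero], mul_sum]
    refine sum_congr rfl fun k _ => ?_
    unfold lagSum lagTerm
    ring
  have hgeom : ∑' k : ℕ, α ^ k * ∫ x in (0 : ℝ)..1, g x * h x =
      1 / (1 - α) * ∫ x in (0 : ℝ)..1, g x * h x := by
    rw [tsum_mul_right, tsum_geometric_of_norm_lt_one (by rwa [Real.norm_eq_abs]), one_div]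
  simp_rw [hlag, ← hgeom]
  refine tendsto_tsum_of_dominated_convergence (bound := fun k => |α| ^ k * (Mg * Mh))
    ((summable_geometric_of_lt_one (abs_nonneg α) hα).mul_right _)
    (fun k => (tendsto_lagSum hg hh k).const_mul _) (Eventually.of_forall fun T k => ?_)
  rw [norm_mul, norm_pow, Real.norm_eq_abs, Real.norm_eq_abs]
  gcongr
  exact abs_lagSum_le hgM hhM T k

lemma Matrix.transpose_mul_transpose_mul_inv_diagonal_mul_apply {m n R : Type*} [Fintype m]
    [DecidableEq m] [Field R] (F : Matrix m n R) (L : Matrix m m R) {d : m → R}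
    (hd : ∀ t, d t ≠ 0) (i j : n) :
    (Fᵀ * Lᵀ * (diagonal d)⁻¹ * F) i j = ∑ s, ∑ t, L s t * (F t i * (F s j / d s)) := by
  have hinv : (diagonal d)⁻¹ = diagonal d⁻¹ := inv_eq_right_inv <| by
    rw [diagonal_mul_diagonal, ← diagonal_one]
    exact congrArg diagonal (funext fun t => mul_inv_cancel₀ (hd t))
  rw [hinv, mul_apply]
  simp only [mul_diagonal]
  simp only [mul_apply, transpose_apply, sum_mul]
  refine sum_congr rfl fun s _ => sum_congr rfl fun t _ => ?_
  rw [Pi.inv_apply, div_eq_mul_inv]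
  ring

/-- Riemann-sum limit: with `f_t = ψ(t/T)`, `σ_t² = σ²(t/T)` for continuous `ψ`, `σ²`
with `σ² ≥ a > 0`, `|α| < 1`, and `L` the matrix with entries `α^(t-s-1)` for `t > s`,
`(1/T) F' L' D⁻¹ F → (1/(1-α)) ∫₀¹ ψ(s)ψ(s)'/σ²(s) ds`. -/
theorem stmt_9 (r : ℕ) (α a : ℝ) (hα : |α| < 1) (ha : 0 < a)
    (ψ : ℝ → Fin r → ℝ) (σsq : ℝ → ℝ)
    (hψ : ContinuousOn ψ (Set.Icc 0 1)) (hσcont : ContinuousOn σsq (Set.Icc 0 1))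
    (hσ : ∀ s ∈ Set.Icc (0:ℝ) 1, a ≤ σsq s)
    (L : (T : ℕ) → Matrix (Fin T) (Fin T) ℝ)
    (hL : ∀ (T : ℕ) (t s : Fin T), L T t s =
      if (s : ℕ) < (t : ℕ) then α ^ ((t : ℕ) - (s : ℕ) - 1) else 0)
    (F : (T : ℕ) → Matrix (Fin T) (Fin r) ℝ)
    (hF : ∀ (T : ℕ) (t : Fin T) (j : Fin r), F T t j = ψ (((t : ℕ) + 1) / T) j)
    (D : (T : ℕ) → Matrix (Fin T) (Fin T) ℝ)
    (hD : ∀ T : ℕ, D T = Matrix.diagonal (fun t : Fin T => σsq (((t : ℕ) + 1) / T))) :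
    Tendsto (fun T : ℕ => (1 / (T : ℝ)) • ((F T)ᵀ * (L T)ᵀ * (D T)⁻¹ * F T))
      atTop (nhds ((1 / (1 - α)) •
        Matrix.of fun i j : Fin r => ∫ s in (0:ℝ)..1, ψ s i * ψ s j / σsq s)) := by
  have hσne : ∀ x ∈ Set.Icc (0 : ℝ) 1, σsq x ≠ 0 := fun x hx => (ha.trans_le (hσ x hx)).ne'
  refine tendsto_pi_nhds.2 fun i => tendsto_pi_nhds.2 fun j => ?_
  have hlim := tendsto_lowerTriangular_pow_sum hα (g := fun x => ψ x i)
    (h := fun x => ψ x j / σsq x) ((continuous_apply i).comp_continuousOn hψ)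
    (((continuous_apply j).comp_continuousOn hψ).div hσcont hσne)
  simp only [Matrix.smul_apply, of_apply, smul_eq_mul, mul_div_assoc]
  refine hlim.congr fun T => ?_
  rw [hD, transpose_mul_transpose_mul_inv_diagonal_mul_apply (F T) (L T)
    (d := fun t : Fin T => σsq (((t : ℕ) + 1) / T)) fun t => hσne _ (gridPoint_mem_Icc t.2)]
  simp only [sum_range, hL, hF, gridPoint]
end

section
/- Under the same assumptions (ψ, σ² continuous on [0,1], σ² ≥ a > 0, f_t = ψ(t/T), σ_t² = σ²(t/T), |α| < 1), one has (1/T)·F'L'D⁻¹LF → (1/(1-α)²)·∫₀¹ ψ(s)ψ(s)'/σ²(s) ds as T → ∞. -/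
/-!
Entry `(i, j)` of `(1/T) F'L'D⁻¹LF` is the average over `t < T` of `(LF)_{t i} (LF)_{t j} / σ_t²`.
Since `(Lx)_{t+1} = α (Lx)_t + x_t`, the error `d_t = (Lx)_t - x_t / (1 - α)` obeys
`d_{t+1} = α d_t - (x_{t+1} - x_t) / (1 - α)`. For `x_t = ψ((t+1)/T)` the increments are uniformly
small by uniform continuity, so `d_t` is small up to a geometrically decaying transient, and its
average tends to `0`. Hence `(LF)_{t k}` may be replaced by `ψ_k((t+1)/T) / (1 - α)` in the limit,
and what remains is a Riemann sum of `ψ_i ψ_j / ((1 - α)² σ²)`.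
-/

open Matrix Filter Finset
open scoped BigOperators

def expFilter (α : ℝ) (x : ℕ → ℝ) (t : ℕ) : ℝ := ∑ s ∈ range t, α ^ (t - s - 1) * x s

section expFilter

variable {α : ℝ} {x : ℕ → ℝ}

@[simp] lemma expFilter_zero : expFilter α x 0 = 0 := by simp [expFilter]

lemma expFilter_succ (t : ℕ) : expFilter α x (t + 1) = α * expFilter α x t + x t := by
  rw [expFilter, sum_range_succ, expFilter, mul_sum, Nat.add_sub_cancel_left, Nat.sub_self,
    pow_zero, one_mul]
  congr 1
  refine sum_congr rfl fun s hs => ?_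
  rw [show t + 1 - s - 1 = (t - s - 1) + 1 by have := mem_range.1 hs; omega, pow_succ]
  ring

lemma abs_expFilter_le (hα : |α| < 1) {M : ℝ} (hM : 0 ≤ M) {t : ℕ}
    (hx : ∀ s < t, |x s| ≤ M) : |expFilter α x t| ≤ M / (1 - |α|) := by
  have hβ : 0 < 1 - |α| := by linarith
  induction t with
  | zero => simpa using div_nonneg hM hβ.le
  | succ t ih =>
    have hE := ih fun s hs => hx s (by omega)
    calc |expFilter α x (t + 1)| ≤ |α| * |expFilter α x t| + |x t| := by
          rw [expFilter_succ, ← abs_mul]; exact abs_add_le _ _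
      _ ≤ |α| * (M / (1 - |α|)) + M := by gcongr; exact hx t (lt_add_one t)
      _ = M / (1 - |α|) := by field_simp; ring

lemma abs_expFilter_sub_div_le (hα : |α| < 1) {ω : ℝ} (hω : 0 ≤ ω) {t : ℕ}
    (hx : ∀ s < t, |x (s + 1) - x s| ≤ ω) :
    |expFilter α x t - x t / (1 - α)|
      ≤ ω / ((1 - α) * (1 - |α|)) + |α| ^ t * |x 0| / (1 - α) := by
  have h1α : 0 < 1 - α := by linarith [le_abs_self α]
  have hβ : 0 < 1 - |α| := by linarith
  induction t with
  | zero =>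
    rw [expFilter_zero, zero_sub, abs_neg, abs_div, abs_of_pos h1α, pow_zero, one_mul]
    exact le_add_of_nonneg_left (by positivity)
  | succ t ih =>
    have hd := ih fun s hs => hx s (by omega)
    have hrec : expFilter α x (t + 1) - x (t + 1) / (1 - α)
        = α * (expFilter α x t - x t / (1 - α)) - (x (t + 1) - x t) / (1 - α) := by
      rw [expFilter_succ]; field_simp; ring
    calc |expFilter α x (t + 1) - x (t + 1) / (1 - α)|
        ≤ |α| * |expFilter α x t - x t / (1 - α)| + |x (t + 1) - x t| / (1 - α) := by
          rw [hrec, ← abs_mul, ← abs_of_pos h1α, ← abs_div, abs_of_pos h1α]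
          exact abs_sub _ _
      _ ≤ |α| * (ω / ((1 - α) * (1 - |α|)) + |α| ^ t * |x 0| / (1 - α)) + ω / (1 - α) := by
          gcongr; exact hx t (lt_add_one t)
      _ = ω / ((1 - α) * (1 - |α|)) + |α| ^ (t + 1) * |x 0| / (1 - α) := by
          field_simp; ring

lemma expect_abs_expFilter_sub_div_le (hα : |α| < 1) {ω : ℝ} (hω : 0 ≤ ω) {T : ℕ}
    (hx : ∀ s, s + 1 < T → |x (s + 1) - x s| ≤ ω) :
    𝔼 t ∈ range T, |expFilter α x t - x t / (1 - α)|
      ≤ (ω + |x 0| / T) / ((1 - α) * (1 - |α|)) := by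
  have h1α : 0 < 1 - α := by linarith [le_abs_self α]
  have hβ : 0 < 1 - |α| := by linarith
  rcases Nat.eq_zero_or_pos T with rfl | hT
  · simp only [range_zero, expect_empty]; positivity
  have hT' : (0 : ℝ) < T := by exact_mod_cast hT
  rw [expect_eq_sum_div_card, card_range, div_le_iff₀ hT']
  calc ∑ t ∈ range T, |expFilter α x t - x t / (1 - α)|
      ≤ ∑ t ∈ range T, (ω / ((1 - α) * (1 - |α|)) + |α| ^ t * |x 0| / (1 - α)) :=
        sum_le_sum fun t ht =>
          abs_expFilter_sub_div_le hα hω fun s hs => hx s (by have := mem_range.1 ht; omega)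
    _ = T * (ω / ((1 - α) * (1 - |α|))) + (∑ t ∈ range T, |α| ^ t) * (|x 0| / (1 - α)) := by
        rw [sum_add_distrib, sum_const, card_range, nsmul_eq_mul, sum_mul]
        simp only [mul_div_assoc]
    _ ≤ T * (ω / ((1 - α) * (1 - |α|))) + (1 - |α|)⁻¹ * (|x 0| / (1 - α)) := by
        gcongr
        simpa using geom_sum_Ico_le_of_lt_one (abs_nonneg α) hα (m := 0) (n := T)
    _ = (ω + |x 0| / T) / ((1 - α) * (1 - |α|)) * T := by
        field_simp

end expFilter

noncomputable def gridSample (u : ℝ → ℝ) (T s : ℕ) : ℝ := u ((s + 1) / T)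

lemma gridPoint_mem_Icc_s10 {T s : ℕ} (hs : s < T) : ((s : ℝ) + 1) / T ∈ Set.Icc (0 : ℝ) 1 := by
  have hT : (0 : ℝ) < T := by exact_mod_cast (Nat.zero_le s).trans_lt hs
  refine ⟨by positivity, (div_le_one hT).2 ?_⟩
  exact_mod_cast hs

section Sampling

variable {u : ℝ → ℝ}

lemma eventually_abs_sub_le_of_abs_sub_le_inv (hu : ContinuousOn u (Set.Icc 0 1)) {ε : ℝ}
    (hε : 0 < ε) : ∀ᶠ T : ℕ in atTop, ∀ x ∈ Set.Icc (0 : ℝ) 1, ∀ y ∈ Set.Icc (0 : ℝ) 1,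
      |x - y| ≤ (T : ℝ)⁻¹ → |u x - u y| ≤ ε := by
  obtain ⟨δ, hδ, hu⟩ := Metric.uniformContinuousOn_iff.1
    (isCompact_Icc.uniformContinuousOn_of_continuous hu) ε hε
  filter_upwards [(tendsto_inv_atTop_zero.comp tendsto_natCast_atTop_atTop).eventually
    (gt_mem_nhds hδ)] with T hT x hx y hy hxy
  exact (hu x hx y hy (hxy.trans_lt hT)).le

lemma abs_intervalIntegral_sub_mul_le {f : ℝ → ℝ} {a b c ε : ℝ} (hab : a ≤ b)
    (hf : IntervalIntegrable f MeasureTheory.volume a b) (hc : ∀ x ∈ Set.Icc a b, |f x - c| ≤ ε) :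
    |(∫ x in a..b, f x) - (b - a) * c| ≤ ε * (b - a) := by
  have hsub : (∫ x in a..b, f x) - (b - a) * c = ∫ x in a..b, (f x - c) := by
    rw [intervalIntegral.integral_sub hf intervalIntegrable_const, intervalIntegral.integral_const,
      smul_eq_mul]
  rw [hsub, ← abs_of_nonneg (sub_nonneg.2 hab)]
  refine intervalIntegral.norm_integral_le_of_norm_le_const (f := fun x => f x - c) fun x hx => ?_
  rw [Set.uIoc_of_le hab] at hx
  exact hc x (Set.Ioc_subset_Icc_self hx)

lemma tendsto_expect_gridSample (hu : ContinuousOn u (Set.Icc 0 1)) :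
    Tendsto (fun T : ℕ => 𝔼 t ∈ range T, gridSample u T t) atTop
      (nhds (∫ s in (0 : ℝ)..1, u s)) := by
  refine Metric.tendsto_nhds.2 fun ε hε => ?_
  filter_upwards [eventually_abs_sub_le_of_abs_sub_le_inv hu (half_pos hε),
    eventually_gt_atTop 0] with T hmod hT
  have hT' : (0 : ℝ) < T := by exact_mod_cast hT
  set p : ℕ → ℝ := fun k => k / T
  have hp : ∀ k, p (k + 1) - p k = (T : ℝ)⁻¹ := fun k => by
    simp only [p]; push_cast; field_simp; ring
  have hpmem : ∀ k < T, Set.Icc (p k) (p (k + 1)) ⊆ Set.Icc 0 1 := fun k hk =>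
    Set.Icc_subset_Icc (by positivity) (by simpa [p] using (gridPoint_mem_Icc_s10 hk).2)
  have hint : ∀ k < T, IntervalIntegrable u MeasureTheory.volume (p k) (p (k + 1)) := fun k hk =>
    (hu.mono (hpmem k hk)).intervalIntegrable_of_Icc (by linarith [hp k, inv_pos.2 hT'])
  have hsplit : ∫ s in (0 : ℝ)..1, u s = ∑ k ∈ range T, ∫ s in p k..p (k + 1), u s := by
    rw [intervalIntegral.sum_integral_adjacent_intervals hint]
    simp [p, hT'.ne']
  rw [Real.dist_eq, hsplit, expect_eq_sum_div_card, card_range, sum_div, ← sum_sub_distrib]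
  calc |∑ k ∈ range T, (gridSample u T k / T - ∫ s in p k..p (k + 1), u s)|
      ≤ ∑ k ∈ range T, ε / 2 * (p (k + 1) - p k) := by
        refine (abs_sum_le_sum_abs _ _).trans (sum_le_sum fun k hk => ?_)
        have hk := mem_range.1 hk
        rw [abs_sub_comm, div_eq_mul_inv, mul_comm, ← hp k]
        refine abs_intervalIntegral_sub_mul_le (by linarith [hp k, inv_pos.2 hT']) (hint k hk)
          fun x hx => ?_
        refine hmod x (hpmem k hk hx) _ (gridPoint_mem_Icc_s10 hk) ?_
        have hpk : p (k + 1) = ((k : ℝ) + 1) / T := by simp only [p]; push_cast; rfl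
        rw [abs_sub_comm, abs_of_nonneg (by linarith [hx.2]), ← hp k]
        linarith [hx.1]
    _ = ε / 2 := by simp only [hp, sum_const, card_range, nsmul_eq_mul]; field_simp
    _ < ε := half_lt_self hε

lemma tendsto_expect_abs_expFilter_gridSample_sub {α : ℝ} (hα : |α| < 1)
    (hu : ContinuousOn u (Set.Icc 0 1)) :
    Tendsto (fun T : ℕ => 𝔼 t ∈ range T,
      |expFilter α (gridSample u T) t - gridSample u T t / (1 - α)|) atTop (nhds 0) := by
  have hc : 0 < (1 - α) * (1 - |α|) := mul_pos (by linarith [le_abs_self α]) (by linarith)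
  set c := (1 - α) * (1 - |α|)
  obtain ⟨M, hM⟩ := isCompact_Icc.exists_bound_of_continuousOn hu
  refine tendsto_order.2 ⟨fun b hb => Eventually.of_forall fun T =>
    hb.trans_le (expect_nonneg fun _ _ => abs_nonneg _), fun ε hε => ?_⟩
  have hεc : 0 < ε * c / 2 := by positivity
  filter_upwards [eventually_abs_sub_le_of_abs_sub_le_inv hu hεc, eventually_gt_atTop 0,
    (tendsto_const_div_atTop_nhds_zero_nat M).eventually (gt_mem_nhds hεc)] with T hmod hT hMT
  have hstep : ∀ s, s + 1 < T → |gridSample u T (s + 1) - gridSample u T s| ≤ ε * c / 2 :=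
    fun s hs => hmod _ (gridPoint_mem_Icc_s10 (by exact_mod_cast hs)) _ (gridPoint_mem_Icc_s10 (by omega))
      (by rw [← sub_div]; push_cast; simp)
  calc 𝔼 t ∈ range T, |expFilter α (gridSample u T) t - gridSample u T t / (1 - α)|
      ≤ (ε * c / 2 + |gridSample u T 0| / T) / c := expect_abs_expFilter_sub_div_le hα hεc.le hstep
    _ ≤ (ε * c / 2 + M / T) / c := by
        gcongr; exact (Real.norm_eq_abs _).symm.trans_le (hM _ (gridPoint_mem_Icc_s10 hT))
    _ < (ε * c / 2 + ε * c / 2) / c := by gcongr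
    _ = ε := by field_simp; ring

end Sampling

section Averages

variable {a b c d : ℕ → ℕ → ℝ}

lemma tendsto_expect_of_tendsto_expect_abs_sub {l : ℝ}
    (hab : Tendsto (fun T => 𝔼 t ∈ range T, |a T t - b T t|) atTop (nhds 0))
    (hb : Tendsto (fun T => 𝔼 t ∈ range T, b T t) atTop (nhds l)) :
    Tendsto (fun T => 𝔼 t ∈ range T, a T t) atTop (nhds l) := by
  have hsub : Tendsto (fun T => 𝔼 t ∈ range T, (a T t - b T t)) atTop (nhds 0) :=
    squeeze_zero_norm (fun T => abs_expect_le _ _) hab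
  simpa [expect_sub_distrib] using hsub.add hb

lemma tendsto_expect_abs_mul_sub_mul {A B : ℝ} (ha : ∀ T, ∀ t < T, |a T t| ≤ A)
    (hd : ∀ T, ∀ t < T, |d T t| ≤ B)
    (hab : Tendsto (fun T => 𝔼 t ∈ range T, |a T t - b T t|) atTop (nhds 0))
    (hcd : Tendsto (fun T => 𝔼 t ∈ range T, |c T t - d T t|) atTop (nhds 0)) :
    Tendsto (fun T => 𝔼 t ∈ range T, |a T t * c T t - b T t * d T t|) atTop (nhds 0) := by
  have hbound : ∀ T, 𝔼 t ∈ range T, |a T t * c T t - b T t * d T t|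
      ≤ A * 𝔼 t ∈ range T, |c T t - d T t| + B * 𝔼 t ∈ range T, |a T t - b T t| := fun T => by
    rw [mul_expect, mul_expect, ← expect_add_distrib]
    refine expect_le_expect fun t ht => ?_
    have ht := mem_range.1 ht
    calc |a T t * c T t - b T t * d T t|
        = |a T t * (c T t - d T t) + (a T t - b T t) * d T t| := by ring_nf
      _ ≤ |a T t| * |c T t - d T t| + |a T t - b T t| * |d T t| := by
        rw [← abs_mul, ← abs_mul]; exact abs_add_le _ _
      _ ≤ A * |c T t - d T t| + B * |a T t - b T t| := by
        rw [mul_comm _ |d T t|]; gcongr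
        · exact ha T t ht
        · exact hd T t ht
  refine squeeze_zero (fun T => expect_nonneg fun _ _ => abs_nonneg _) hbound ?_
  simpa using (hcd.const_mul A).add (hab.const_mul B)

end Averages

lemma tendsto_expect_expFilter_mul_expFilter_mul_inv {α m : ℝ} (hα : |α| < 1) (hm : 0 < m)
    {u v w : ℝ → ℝ} (hu : ContinuousOn u (Set.Icc 0 1)) (hv : ContinuousOn v (Set.Icc 0 1))
    (hw : ContinuousOn w (Set.Icc 0 1)) (hwm : ∀ s ∈ Set.Icc (0 : ℝ) 1, m ≤ w s) :
    Tendsto (fun T : ℕ => 𝔼 t ∈ range T, expFilter α (gridSample u T) t *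
        expFilter α (gridSample v T) t * (gridSample w T t)⁻¹) atTop
      (nhds (∫ s in (0 : ℝ)..1, u s / (1 - α) * (v s / (1 - α)) * (w s)⁻¹)) := by
  have h1α : 0 < 1 - α := by linarith [le_abs_self α]
  have hβ : 0 < 1 - |α| := by linarith
  have hbound : ∀ {f : ℝ → ℝ}, ContinuousOn f (Set.Icc 0 1) →
      ∃ M, 0 ≤ M ∧ ∀ s ∈ Set.Icc (0 : ℝ) 1, |f s| ≤ M := fun hf => by
    obtain ⟨M, hM⟩ := isCompact_Icc.exists_bound_of_continuousOn hf
    exact ⟨M, (norm_nonneg _).trans (hM 0 ⟨le_rfl, zero_le_one⟩), hM⟩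
  obtain ⟨Mu, hMu0, hMu⟩ := hbound hu
  obtain ⟨Mv, hMv0, hMv⟩ := hbound hv
  have hfilter : ∀ {f : ℝ → ℝ} {M : ℝ}, 0 ≤ M → (∀ s ∈ Set.Icc (0 : ℝ) 1, |f s| ≤ M) →
      ∀ T, ∀ t < T, |expFilter α (gridSample f T) t| ≤ M / (1 - |α|) := fun hM0 hM T t ht =>
    abs_expFilter_le hα hM0 fun s hs => hM _ (gridPoint_mem_Icc_s10 (hs.trans ht))
  refine tendsto_expect_of_tendsto_expect_abs_sub
    (b := fun T t => gridSample u T t / (1 - α) * (gridSample v T t / (1 - α)) *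
      (gridSample w T t)⁻¹) ?_ (tendsto_expect_gridSample ?_)
  · refine tendsto_expect_abs_mul_sub_mul (A := Mu / (1 - |α|) * (Mv / (1 - |α|)))
      (B := m⁻¹) (fun T t ht => ?_) (fun T t ht => ?_) ?_ (by simp)
    · rw [abs_mul]
      exact mul_le_mul (hfilter hMu0 hMu T t ht) (hfilter hMv0 hMv T t ht) (abs_nonneg _)
        (by positivity)
    · have hwt : m ≤ gridSample w T t := hwm _ (gridPoint_mem_Icc_s10 ht)
      rw [abs_inv, abs_of_pos (hm.trans_le hwt)]
      exact inv_anti₀ hm hwt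
    · refine tendsto_expect_abs_mul_sub_mul (A := Mu / (1 - |α|)) (B := Mv / (1 - α))
        (fun T t ht => hfilter hMu0 hMu T t ht) (fun T t ht => ?_)
        (tendsto_expect_abs_expFilter_gridSample_sub hα hu)
        (tendsto_expect_abs_expFilter_gridSample_sub hα hv)
      rw [abs_div, abs_of_pos h1α]
      exact div_le_div_of_nonneg_right (hMv _ (gridPoint_mem_Icc_s10 ht)) h1α.le
  · exact ((hu.div_const _).mul (hv.div_const _)).mul
      (hw.inv₀ fun s hs => (hm.trans_le (hwm s hs)).ne')

lemma inv_diagonal_of_ne_zero {n : Type*} [Fintype n] [DecidableEq n] {v : n → ℝ}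
    (hv : ∀ i, v i ≠ 0) : (diagonal v)⁻¹ = diagonal fun i => (v i)⁻¹ := by
  refine inv_eq_right_inv ?_
  rw [diagonal_mul_diagonal, ← diagonal_one]
  exact congrArg diagonal (funext fun i => mul_inv_cancel₀ (hv i))

lemma transpose_mul_diagonal_mul_apply {n m : Type*} [Fintype n] [DecidableEq n]
    (P : Matrix n m ℝ) (v : n → ℝ) (i j : m) :
    (Pᵀ * diagonal v * P) i j = ∑ t, P t i * v t * P t j := by
  rw [mul_apply]
  simp only [mul_diagonal, transpose_apply]

lemma sum_fin_ite_lt_eq_expFilter {T : ℕ} (α : ℝ) (x : ℕ → ℝ) (t : Fin T) :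
    ∑ s : Fin T, (if (s : ℕ) < t then α ^ ((t : ℕ) - s - 1) else 0) * x s = expFilter α x t := by
  rw [Fin.sum_univ_eq_sum_range (fun s => (if s < (t : ℕ) then α ^ ((t : ℕ) - s - 1) else 0) * x s),
    expFilter, ← sum_range_add_sum_Ico _ t.isLt.le]
  rw [sum_eq_zero (s := Ico (t : ℕ) T) fun s hs => by
    rw [if_neg (mem_Ico.1 hs).1.not_gt, zero_mul], add_zero]
  exact sum_congr rfl fun s hs => by rw [if_pos (mem_range.1 hs)]

/-- Riemann-sum limit: with `f_t = ψ(t/T)`, `σ_t² = σ²(t/T)` for continuous `ψ`, `σ²`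
with `σ² ≥ a > 0`, `|α| < 1`, and `L` the matrix with entries `α^(t-s-1)` for `t > s`,
`(1/T) F' L' D⁻¹ L F → (1/(1-α)²) ∫₀¹ ψ(s)ψ(s)'/σ²(s) ds`. -/
theorem stmt_10 (r : ℕ) (α a : ℝ) (hα : |α| < 1) (ha : 0 < a)
    (ψ : ℝ → Fin r → ℝ) (σsq : ℝ → ℝ)
    (hψ : ContinuousOn ψ (Set.Icc 0 1)) (hσcont : ContinuousOn σsq (Set.Icc 0 1))
    (hσ : ∀ s ∈ Set.Icc (0:ℝ) 1, a ≤ σsq s)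
    (L : (T : ℕ) → Matrix (Fin T) (Fin T) ℝ)
    (hL : ∀ (T : ℕ) (t s : Fin T), L T t s =
      if (s : ℕ) < (t : ℕ) then α ^ ((t : ℕ) - (s : ℕ) - 1) else 0)
    (F : (T : ℕ) → Matrix (Fin T) (Fin r) ℝ)
    (hF : ∀ (T : ℕ) (t : Fin T) (j : Fin r), F T t j = ψ (((t : ℕ) + 1) / T) j)
    (D : (T : ℕ) → Matrix (Fin T) (Fin T) ℝ)
    (hD : ∀ T : ℕ, D T = Matrix.diagonal (fun t : Fin T => σsq (((t : ℕ) + 1) / T))) :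
    Tendsto (fun T : ℕ => (1 / (T : ℝ)) • ((F T)ᵀ * (L T)ᵀ * (D T)⁻¹ * (L T * F T)))
      atTop (nhds ((1 / (1 - α) ^ 2) •
        Matrix.of fun i j : Fin r => ∫ s in (0:ℝ)..1, ψ s i * ψ s j / σsq s)) := by
  have hψ' : ∀ k, ContinuousOn (fun s => ψ s k) (Set.Icc 0 1) := fun k =>
    (continuous_apply k).comp_continuousOn hψ
  have hσ0 : ∀ T : ℕ, ∀ t : Fin T, σsq (((t : ℕ) + 1) / T) ≠ 0 := fun T t =>
    (ha.trans_le (hσ _ (gridPoint_mem_Icc_s10 t.isLt))).ne'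
  have hLF : ∀ T (t : Fin T) k,
      (L T * F T) t k = expFilter α (gridSample (fun s => ψ s k) T) t := fun T t k => by
    rw [mul_apply]
    simp only [hL, hF]
    exact sum_fin_ite_lt_eq_expFilter α (gridSample (fun s => ψ s k) T) t
  refine tendsto_pi_nhds.2 fun i => tendsto_pi_nhds.2 fun j => ?_
  convert tendsto_expect_expFilter_mul_expFilter_mul_inv hα ha (hψ' i) (hψ' j) hσcont hσ using 1
  · funext T
    rw [Matrix.smul_apply, ← transpose_mul, hD, inv_diagonal_of_ne_zero (hσ0 T),
      transpose_mul_diagonal_mul_apply, expect_eq_sum_div_card, card_range]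
    simp only [hLF]
    rw [smul_eq_mul, one_div_mul_eq_div]
    congr 1
    exact (Fin.sum_univ_eq_sum_range (fun t => expFilter α (gridSample (fun s => ψ s i) T) t *
      (gridSample σsq T t)⁻¹ * expFilter α (gridSample (fun s => ψ s j) T) t) T).trans
      (sum_congr rfl fun t _ => by ring)
  · have h1α : 1 - α ≠ 0 := by linarith [le_abs_self α]
    rw [Matrix.smul_apply, of_apply, smul_eq_mul, ← intervalIntegral.integral_const_mul]
    congr! 2 with s
    field_simp
end
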